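/- arXiv:1501.02925 — 3 statements merged into one kernel-verified Lean document; each statement's English description precedes it below -/
import Mathlib

section
/- Subject reduction holds for the guarded lambda calculus: if the closed term t has type A and t reduces (in zero or more call-by-name steps) to u, then u has type A. -/
/-- Terms of the guarded lambda calculus `gλ`, with de Bruijn indices.
In `prev σ.t` and `box σ.t` the explicit substitution `σ` is a list of terms for
the de Bruijn variables `0, ..., n-1` of `t` (which are all of `t`'s free variables). -/
inductive Tm : Type
  | var : ℕ → Tm
  | unit : Tm
  | zero : Tm
  | succ : Tm → Tm
  | pair : Tm → Tm → Tm
  | proj : Bool → Tm → Tm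
  | lam : Tm → Tm
  | app : Tm → Tm → Tm
  | fold : Tm → Tm
  | unfold : Tm → Tm
  | next : Tm → Tm
  | prev : List Tm → Tm → Tm
  | box : List Tm → Tm → Tm
  | unbox : Tm → Tm
  | ap : Tm → Tm → Tm

namespace Tm

/-- Renaming of free variables. -/
def rename (f : ℕ → ℕ) : Tm → Tm
  | var n => var (f n)
  | unit => unit
  | zero => zero
  | succ t => succ (t.rename f)
  | pair t u => pair (t.rename f) (u.rename f)
  | proj d t => proj d (t.rename f)
  | lam t => lam (t.rename fun n => match n with | 0 => 0 | n + 1 => f n + 1)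
  | app t u => app (t.rename f) (u.rename f)
  | fold t => fold (t.rename f)
  | unfold t => unfold (t.rename f)
  | next t => next (t.rename f)
  | prev ts t => prev (ts.attach.map fun x => x.1.rename f) t
  | box ts t => box (ts.attach.map fun x => x.1.rename f) t
  | unbox t => unbox (t.rename f)
  | ap t u => ap (t.rename f) (u.rename f)
decreasing_by
  all_goals simp_wf
  all_goals try omega
  all_goals (have := List.sizeOf_lt_of_mem x.2; omega)

/-- Capture-avoiding simultaneous substitution.  The bodies of `prev` and `box`
are closed under their explicit substitutions, so only the lists are substituted. -/
def subst (σ : ℕ → Tm) : Tm → Tm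
  | var n => σ n
  | unit => unit
  | zero => zero
  | succ t => succ (t.subst σ)
  | pair t u => pair (t.subst σ) (u.subst σ)
  | proj d t => proj d (t.subst σ)
  | lam t => lam (t.subst fun n => match n with | 0 => var 0 | n + 1 => (σ n).rename Nat.succ)
  | app t u => app (t.subst σ) (u.subst σ)
  | fold t => fold (t.subst σ)
  | unfold t => unfold (t.subst σ)
  | next t => next (t.subst σ)
  | prev ts t => prev (ts.attach.map fun x => x.1.subst σ) t
  | box ts t => box (ts.attach.map fun x => x.1.subst σ) t
  | unbox t => unbox (t.subst σ)
  | ap t u => ap (t.subst σ) (u.subst σ)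
decreasing_by
  all_goals simp_wf
  all_goals try omega
  all_goals (have := List.sizeOf_lt_of_mem x.2; omega)

/-- Single substitution `t[u/x]` (for de Bruijn variable `0`). -/
def subst1 (u : Tm) (t : Tm) : Tm :=
  t.subst fun n => match n with | 0 => u | n + 1 => var n

/-- Simultaneous substitution `t[t⃗/x⃗]` of a list of terms for variables `0,...,n-1`. -/
def substList (ts : List Tm) (t : Tm) : Tm :=
  t.subst fun n => if h : n < ts.length then ts[n] else var (n - ts.length)

end Tm

/-- Numerals `succⁿ zero`. -/
inductive Numeral : Tm → Prop
  | zero : Numeral .zero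
  | succ {t} : Numeral t → Numeral (.succ t)

/-- Values of `gλ`. -/
inductive Value : Tm → Prop
  | unit : Value .unit
  | num {t} : Numeral t → Value t
  | pair (t u : Tm) : Value (.pair t u)
  | lam (t : Tm) : Value (.lam t)
  | fold (t : Tm) : Value (.fold t)
  | box (ts : List Tm) (t : Tm) : Value (.box ts t)
  | next (t : Tm) : Value (.next t)

/-- The reduction rules of `gλ`. -/
inductive Head : Tm → Tm → Prop
  | proj {d t₁ t₂} : Head (.proj d (.pair t₁ t₂)) (cond d t₁ t₂)
  | beta {t u} : Head (.app (.lam t) u) (Tm.subst1 u t)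
  | unfoldFold {t} : Head (.unfold (.fold t)) t
  | prevSubst {ts t} : ts ≠ [] → Head (.prev ts t) (.prev [] (Tm.substList ts t))
  | prevNext {t} : Head (.prev [] (.next t)) t
  | unboxBox {ts t} : Head (.unbox (.box ts t)) (Tm.substList ts t)
  | apNext {t u} : Head (.ap (.next t) (.next u)) (.next (.app t u))

/-- Call-by-name reduction: the reduction rules applied inside evaluation contexts
`E ::= · | succ E | πd E | E t | unfold E | prev E | unbox E | E ⊛ t | v ⊛ E`. -/
inductive Step : Tm → Tm → Prop
  | head {t u} : Head t u → Step t u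
  | succ {t u} : Step t u → Step (.succ t) (.succ u)
  | proj {d t u} : Step t u → Step (.proj d t) (.proj d u)
  | app {t u s} : Step t u → Step (.app t s) (.app u s)
  | unfold {t u} : Step t u → Step (.unfold t) (.unfold u)
  | prev {t u} : Step t u → Step (.prev [] t) (.prev [] u)
  | unbox {t u} : Step t u → Step (.unbox t) (.unbox u)
  | apL {t u s} : Step t u → Step (.ap t s) (.ap u s)
  | apR {v t u} : Value v → Step t u → Step (.ap v t) (.ap v u)


/-- Types of the guarded lambda calculus, with de Bruijn type variables.
`mu A` binds type variable `0` in `A`. -/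
inductive Ty : Type
  | tvar : ℕ → Ty
  | unit : Ty
  | nat : Ty
  | prod : Ty → Ty → Ty
  | arr : Ty → Ty → Ty
  | mu : Ty → Ty
  | later : Ty → Ty
  | box : Ty → Ty

namespace Ty

def rename (f : ℕ → ℕ) : Ty → Ty
  | tvar n => tvar (f n)
  | unit => unit
  | nat => nat
  | prod A B => prod (A.rename f) (B.rename f)
  | arr A B => arr (A.rename f) (B.rename f)
  | mu A => mu (A.rename fun n => match n with | 0 => 0 | n + 1 => f n + 1)
  | later A => later (A.rename f)
  | box A => box (A.rename f)

def subst (σ : ℕ → Ty) : Ty → Ty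
  | tvar n => σ n
  | unit => unit
  | nat => nat
  | prod A B => prod (A.subst σ) (B.subst σ)
  | arr A B => arr (A.subst σ) (B.subst σ)
  | mu A => mu (A.subst fun n => match n with | 0 => tvar 0 | n + 1 => (σ n).rename Nat.succ)
  | later A => later (A.subst σ)
  | box A => box (A.subst σ)

/-- `A[B/α]` where `α` is the type variable `0`. -/
def subst0 (B : Ty) (A : Ty) : Ty :=
  A.subst fun n => match n with | 0 => B | n + 1 => tvar n

/-- Constant types: every occurrence of `later` is beneath an occurrence of `box`. -/
def IsConst : Ty → Prop
  | tvar _ => True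
  | unit => True
  | nat => True
  | prod A B => A.IsConst ∧ B.IsConst
  | arr A B => A.IsConst ∧ B.IsConst
  | mu A => A.IsConst
  | later _ => False
  | box _ => True

end Ty

/-- The typing judgement of the guarded lambda calculus. -/
inductive HasTy : List Ty → Tm → Ty → Prop
  | var {Γ n A} : Γ[n]? = some A → HasTy Γ (.var n) A
  | unit {Γ} : HasTy Γ .unit .unit
  | zero {Γ} : HasTy Γ .zero .nat
  | succ {Γ t} : HasTy Γ t .nat → HasTy Γ (.succ t) .nat
  | pair {Γ t u A B} : HasTy Γ t A → HasTy Γ u B → HasTy Γ (.pair t u) (.prod A B)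
  | proj {Γ d t A B} : HasTy Γ t (.prod A B) → HasTy Γ (.proj d t) (cond d A B)
  | lam {Γ t A B} : HasTy (A :: Γ) t B → HasTy Γ (.lam t) (.arr A B)
  | app {Γ t u A B} : HasTy Γ t (.arr A B) → HasTy Γ u A → HasTy Γ (.app t u) B
  | fold {Γ t A} : HasTy Γ t (Ty.subst0 (.mu A) A) → HasTy Γ (.fold t) (.mu A)
  | unfold {Γ t A} : HasTy Γ t (.mu A) → HasTy Γ (.unfold t) (Ty.subst0 (.mu A) A)
  | next {Γ t A} : HasTy Γ t A → HasTy Γ (.next t) (.later A)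
  | prev {Γ} {ts : List Tm} {t} {As : List Ty} {A} : (∀ B ∈ As, B.IsConst) →
      HasTy As t (.later A) → ts.length = As.length →
      (∀ (k : ℕ) (h1 : k < ts.length) (h2 : k < As.length), HasTy Γ ts[k] As[k]) →
      HasTy Γ (.prev ts t) A
  | box {Γ} {ts : List Tm} {t} {As : List Ty} {A} : (∀ B ∈ As, B.IsConst) →
      HasTy As t A → ts.length = As.length →
      (∀ (k : ℕ) (h1 : k < ts.length) (h2 : k < As.length), HasTy Γ ts[k] As[k]) →
      HasTy Γ (.box ts t) (.box A)
  | unbox {Γ t A} : HasTy Γ t (.box A) → HasTy Γ (.unbox t) A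
  | ap {Γ t u A B} : HasTy Γ t (.later (.arr A B)) → HasTy Γ u (.later A) →
      HasTy Γ (.ap t u) (.later B)

/-- Zero-or-more call-by-name reduction steps. -/
def Steps : Tm → Tm → Prop := Relation.ReflTransGen Step

/-!
The standard argument: typing is stable under renaming and under well-typed substitution, so
every reduction rule preserves types, and evaluation contexts propagate this. Types are only
preserved for closed terms: `prev σ.t ↦ prev [].(t[σ])` puts `t[σ]` under `prev []`, whose body
must be typed in the empty context, which holds because the terms in `σ` are closed.
-/

namespace HasTy

theorem rename {Γ Δ : List Ty} {t : Tm} {A : Ty} {f : ℕ → ℕ} (h : HasTy Γ t A)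
    (hf : ∀ n B, Γ[n]? = some B → Δ[f n]? = some B) : HasTy Δ (t.rename f) A := by
  induction h generalizing Δ f <;> simp only [Tm.rename]
  case var h => exact .var (hf _ _ h)
  case lam ih =>
    refine .lam (ih ?_)
    rintro (_ | n) B hn
    · simpa using hn
    · exact hf n B hn
  case prev hc hb hlen _ _ ih =>
    refine .prev hc hb (by simpa using hlen) fun k h₁ h₂ => ?_
    simpa using ih k (by simpa using h₁) h₂ hf
  case box hc hb hlen _ _ ih =>
    refine .box hc hb (by simpa using hlen) fun k h₁ h₂ => ?_
    simpa using ih k (by simpa using h₁) h₂ hf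
  all_goals constructor <;> solve_by_elim

theorem weaken {Γ : List Ty} {t : Tm} {A B : Ty} (h : HasTy Γ t A) :
    HasTy (B :: Γ) (t.rename Nat.succ) A :=
  h.rename fun _ _ hn => by simpa using hn

theorem subst {Γ Δ : List Ty} {t : Tm} {A : Ty} {σ : ℕ → Tm} (h : HasTy Γ t A)
    (hσ : ∀ n B, Γ[n]? = some B → HasTy Δ (σ n) B) : HasTy Δ (t.subst σ) A := by
  induction h generalizing Δ σ <;> simp only [Tm.subst]
  case var h => exact hσ _ _ h
  case lam ih =>
    refine .lam (ih ?_)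
    rintro (_ | n) B hn
    · exact .var hn
    · exact (hσ n B hn).weaken
  case prev hc hb hlen _ _ ih =>
    refine .prev hc hb (by simpa using hlen) fun k h₁ h₂ => ?_
    simpa using ih k (by simpa using h₁) h₂ hσ
  case box hc hb hlen _ _ ih =>
    refine .box hc hb (by simpa using hlen) fun k h₁ h₂ => ?_
    simpa using ih k (by simpa using h₁) h₂ hσ
  all_goals constructor <;> solve_by_elim

theorem subst1 {Γ : List Ty} {t u : Tm} {A B : Ty} (ht : HasTy (A :: Γ) t B)
    (hu : HasTy Γ u A) : HasTy Γ (Tm.subst1 u t) B := by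
  refine ht.subst ?_
  rintro (_ | n) C hn
  · simpa [← Option.some_inj.mp hn] using hu
  · exact .var hn

theorem substList {Γ As : List Ty} {ts : List Tm} {t : Tm} {A : Ty} (h : HasTy As t A)
    (hlen : ts.length = As.length)
    (hts : ∀ (k : ℕ) (h₁ : k < ts.length) (h₂ : k < As.length), HasTy Γ ts[k] As[k]) :
    HasTy Γ (Tm.substList ts t) A := by
  refine h.subst fun n B hn => ?_
  obtain ⟨hlt, rfl⟩ := List.getElem?_eq_some_iff.mp hn
  rw [dif_pos (hlen ▸ hlt)]
  exact hts n _ hlt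

theorem prev_nil {Γ : List Ty} {t : Tm} {A : Ty} (h : HasTy [] t (.later A)) :
    HasTy Γ (.prev [] t) A :=
  .prev (by simp) h rfl (by simp)

theorem prev_nil_inv {Γ : List Ty} {t : Tm} {A : Ty} (h : HasTy Γ (.prev [] t) A) :
    HasTy [] t (.later A) := by
  cases h with
  | prev _ hb hlen _ => rwa [List.eq_nil_of_length_eq_zero hlen.symm] at hb

theorem of_head {t u : Tm} {A : Ty} (ht : HasTy [] t A) (h : Head t u) : HasTy [] u A := by
  cases h with
  | proj =>
    cases ht with | proj hp =>
    cases hp with | pair h₁ h₂ =>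
    cases ‹Bool›
    exacts [h₂, h₁]
  | beta =>
    cases ht with | app hf hu =>
    cases hf with | lam hb =>
    exact hb.subst1 hu
  | unfoldFold =>
    cases ht with | unfold hf =>
    cases hf with | fold hb =>
    exact hb
  | prevSubst =>
    cases ht with | prev _ hb hlen hts =>
    exact prev_nil (hb.substList hlen hts)
  | prevNext =>
    cases ht.prev_nil_inv with | next hb =>
    exact hb
  | unboxBox =>
    cases ht with | unbox hb =>
    cases hb with | box _ hb hlen hts =>
    exact hb.substList hlen hts
  | apNext =>
    cases ht with | ap h₁ h₂ =>
    cases h₁ with | next h₁ =>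
    cases h₂ with | next h₂ =>
    exact .next (h₁.app h₂)

theorem of_step {t u : Tm} (h : Step t u) {A : Ty} (ht : HasTy [] t A) : HasTy [] u A := by
  induction h generalizing A with
  | head h => exact ht.of_head h
  | succ _ ih => cases ht with | succ ht => exact .succ (ih ht)
  | proj _ ih => cases ht with | proj ht => exact .proj (ih ht)
  | app _ ih => cases ht with | app ht hs => exact .app (ih ht) hs
  | unfold _ ih => cases ht with | unfold ht => exact .unfold (ih ht)
  | prev _ ih => exact prev_nil (ih ht.prev_nil_inv)
  | unbox _ ih => cases ht with | unbox ht => exact .unbox (ih ht)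
  | apL _ ih => cases ht with | ap ht hs => exact .ap (ih ht) hs
  | apR _ _ ih => cases ht with | ap hv ht => exact .ap hv (ih ht)

end HasTy

/-- Subject reduction: a closed well-typed term keeps its type under reduction. -/
theorem subject_reduction {t u : Tm} {A : Ty} (ht : HasTy [] t A) (hr : Steps t u) :
    HasTy [] u A := by
  induction hr with
  | refl => exact ht
  | tail _ h ih => exact ih.of_step h
end

section
/- Products, non-empty coproducts, and exponentials of total and inhabited objects in the topos of trees are total and inhabited: if X and Y have all components non-empty and all restriction maps surjective, then so do X × Y, X + Y, and Y^X. -/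
/-- An object of the topos of trees `S`. -/
structure Obj where
  X : ℕ → Type
  r : ∀ i, X (i + 1) → X i

def IsHom (A B : Obj) (f : ∀ i, A.X i → B.X i) : Prop :=
  ∀ i a, B.r i (f (i + 1) a) = f i (A.r i a)

/-- Global elements `1 → A` of an object `A`. -/
def GS (A : Obj) : Type :=
  { x : ∀ i, A.X i // ∀ i, A.r i (x (i + 1)) = x i }

/-- Carrier of `▶A`: `(▶A)₁ = {*}` and `(▶A)ᵢ₊₁ = Aᵢ`. -/
def LaterX (A : Obj) : ℕ → Type
  | 0 => PUnit
  | j + 1 => A.X j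

def LaterR (A : Obj) : ∀ i, LaterX A (i + 1) → LaterX A i
  | 0 => fun _ => ⟨⟩
  | j + 1 => A.r j

/-- The later functor `▶` on objects. -/
def Later (A : Obj) : Obj := ⟨LaterX A, LaterR A⟩

/-- The natural transformation `next : X → ▶X`. -/
def nextMap (A : Obj) : ∀ i, A.X i → LaterX A i
  | 0 => fun _ => ⟨⟩
  | j + 1 => A.r j

def prodObj (A B : Obj) : Obj where
  X i := A.X i × B.X i
  r i p := (A.r i p.1, B.r i p.2)

/-- The (pointwise) binary coproduct. -/
def sumObj (A B : Obj) : Obj where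
  X i := A.X i ⊕ B.X i
  r i := Sum.map (A.r i) (B.r i)

/-- The exponential `B^A`. -/
def expObj (A B : Obj) : Obj where
  X i := { g : ∀ j, j ≤ i → A.X j → B.X j //
    ∀ j (h : j + 1 ≤ i) (a : A.X (j + 1)),
      B.r j (g (j + 1) h a) = g j (Nat.le_of_succ_le h) (A.r j a) }
  r i g := ⟨fun j hj a => g.1 j (Nat.le_succ_of_le hj) a,
    fun j hj a => g.2 j (Nat.le_succ_of_le hj) a⟩

/-- Total and inhabited: all components non-empty, all restrictions surjective. -/
def TI (A : Obj) : Prop :=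
  (∀ i, Nonempty (A.X i)) ∧ (∀ i, Function.Surjective (A.r i))

/-!
Products and coproducts are computed pointwise, so totality and inhabitation pass to them
componentwise. For `Y^X`, an element at level `i` is given by the constant maps at a global
element of `Y`, which exists because `Y₀` is inhabited and every restriction of `Y` is
surjective. To lift an `i`-tuple `(g₀, …, gᵢ)` to level `i + 1`, choose its last component
`X_{i+1} → Y_{i+1}` by lifting `gᵢ ∘ r` pointwise along the surjection `Y_{i+1} → Yᵢ`.
-/

open Function

section

variable {A B : Obj}

theorem prodObj_r_surjective (hA : ∀ i, Surjective (A.r i)) (hB : ∀ i, Surjective (B.r i))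
    (i : ℕ) : Surjective ((prodObj A B).r i) :=
  (hA i).prodMap (hB i)

theorem sumObj_r_surjective (hA : ∀ i, Surjective (A.r i)) (hB : ∀ i, Surjective (B.r i))
    (i : ℕ) : Surjective ((sumObj A B).r i) :=
  (hA i).sumMap (hB i)

theorem TI.prodObj (hA : TI A) (hB : TI B) : TI (prodObj A B) :=
  ⟨fun i => (hA.1 i).map2 Prod.mk (hB.1 i),
    prodObj_r_surjective hA.2 hB.2⟩

theorem TI.sumObj (hA : TI A) (hB : TI B) : TI (sumObj A B) :=
  ⟨fun i => (hA.1 i).map Sum.inl, sumObj_r_surjective hA.2 hB.2⟩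

noncomputable def liftAlongSurjective (h₀ : Nonempty (B.X 0))
    (hB : ∀ i, Surjective (B.r i)) : ∀ i, B.X i
  | 0 => Classical.choice h₀
  | i + 1 => surjInv (hB i) (liftAlongSurjective h₀ hB i)

theorem nonempty_GS_of_surjective (h₀ : Nonempty (B.X 0)) (hB : ∀ i, Surjective (B.r i)) :
    Nonempty (GS B) :=
  ⟨⟨liftAlongSurjective h₀ hB, fun i => surjInv_eq (hB i) _⟩⟩

def expObj.const (A : Obj) (y : GS B) (i : ℕ) : (expObj A B).X i :=
  ⟨fun j _ _ => y.1 j, fun j _ _ => y.2 j⟩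

def expObj.snoc {i : ℕ} (g : (expObj A B).X i) (f : A.X (i + 1) → B.X (i + 1))
    (hf : ∀ a, B.r i (f a) = g.1 i le_rfl (A.r i a)) : (expObj A B).X (i + 1) :=
  ⟨fun j hj => if h : j ≤ i then g.1 j h else (by omega : i + 1 = j) ▸ f, by
    intro j hj a
    by_cases h : j + 1 ≤ i
    · simp only [dif_pos h, dif_pos (Nat.le_of_succ_le h)]
      exact g.2 j h a
    · obtain rfl : j = i := by omega
      simp only [dif_neg h, dif_pos le_rfl]
      exact hf a⟩

theorem expObj.r_snoc {i : ℕ} (g : (expObj A B).X i) (f : A.X (i + 1) → B.X (i + 1))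
    (hf : ∀ a, B.r i (f a) = g.1 i le_rfl (A.r i a)) :
    (expObj A B).r i (expObj.snoc g f hf) = g := by
  apply Subtype.ext
  funext j hj
  exact dif_pos hj

theorem expObj_r_surjective (hB : ∀ i, Surjective (B.r i)) (i : ℕ) :
    Surjective ((expObj A B).r i) := fun g =>
  ⟨expObj.snoc g (fun a => surjInv (hB i) (g.1 i le_rfl (A.r i a)))
      (fun _ => surjInv_eq (hB i) _),
    expObj.r_snoc _ _ _⟩

theorem TI.expObj (hB : TI B) : TI (expObj A B) :=
  let ⟨y⟩ := nonempty_GS_of_surjective (hB.1 0) hB.2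
  ⟨fun i => ⟨expObj.const A y i⟩, expObj_r_surjective hB.2⟩

end

/-- Products, (non-empty binary) coproducts, and exponentials of total and
inhabited objects are total and inhabited. -/
theorem TI_closed_under_prod_sum_exp (X Y : Obj) (hX : TI X) (hY : TI Y) :
    TI (prodObj X Y) ∧ TI (sumObj X Y) ∧ TI (expObj X Y) :=
  ⟨hX.prodObj hY, hX.sumObj hY, hY.expObj⟩
end

section
/- In the internal logic of the topos of trees, later distributes over binary propositional connectives: for propositions φ, ψ, ▷(φ ∧ ψ) ⟺ ▷φ ∧ ▷ψ, ▷(φ ∨ ψ) ⟺ ▷φ ∨ ▷ψ, and ▷(φ ⇒ ψ) ⟺ (▷φ ⇒ ▷ψ), where ▷ : Ω → Ω is the operation on the subobject classifier sending a sieve/truth-stage downward by one (▷p holds at stage i+1 iff p holds at stage i, and ▷p always holds at stage 1). -/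
/- The subobject classifier `Ω` of the topos of trees has `Ωᵢ = {0, 1, ..., i}`
(for stages `i ≥ 1`): a truth value at stage `i` is the number `k ≤ i` of initial
stages at which the proposition holds.  On this linear Heyting algebra the
lattice operations are: conjunction is `min`, disjunction is `max`, and Heyting
implication is `p ⇒ q = i` if `p ≤ q`, and `q` otherwise.  The later modality is
`▷ᵢ(k) = min (k+1) i`. -/

/-- The later modality on truth values at stage `i`. -/
def laterO (i k : ℕ) : ℕ := min (k + 1) i

/-- Conjunction of truth values. -/
def andO (p q : ℕ) : ℕ := min p q

/-- Disjunction of truth values. -/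
def orO (p q : ℕ) : ℕ := max p q

/-- Heyting implication of truth values at stage `i`. -/
def impO (i p q : ℕ) : ℕ := if p ≤ q then i else q

theorem laterO_monotone (i : ℕ) : Monotone (laterO i) :=
  fun _ _ h => min_le_min_right i (Nat.succ_le_succ h)

theorem laterO_self (i : ℕ) : laterO i i = i :=
  min_eq_right (Nat.le_succ i)

theorem laterO_of_lt {i k : ℕ} (hk : k < i) : laterO i k = k + 1 :=
  min_eq_left hk

theorem laterO_andO (i p q : ℕ) : laterO i (andO p q) = andO (laterO i p) (laterO i q) :=
  (laterO_monotone i).map_min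

theorem laterO_orO (i p q : ℕ) : laterO i (orO p q) = orO (laterO i p) (laterO i q) :=
  (laterO_monotone i).map_max

theorem laterO_impO {i p q : ℕ} (hp : p ≤ i) :
    laterO i (impO i p q) = impO i (laterO i p) (laterO i q) := by
  by_cases hpq : p ≤ q
  · rw [impO, if_pos hpq, impO, if_pos (laterO_monotone i hpq), laterO_self]
  · have hlater_q : laterO i q = q + 1 := laterO_of_lt (by omega)
    -- `▷p ≤ ▷q` can still hold, but only when `p = i = q + 1`, and then both sides are `i`.
    rw [impO, if_neg hpq, hlater_q, impO, laterO]
    split_ifs <;> omega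

theorem later_distributes_over_connectives_general (i p q : ℕ)
    (hp : p ≤ i) :
    laterO i (andO p q) = andO (laterO i p) (laterO i q) ∧
    laterO i (orO p q) = orO (laterO i p) (laterO i q) ∧
    laterO i (impO i p q) = impO i (laterO i p) (laterO i q) :=
  ⟨laterO_andO i p q, laterO_orO i p q, laterO_impO hp⟩

/-- In the internal logic of the topos of trees, later distributes over the binary
propositional connectives: `▷(φ ∧ ψ) ⟺ ▷φ ∧ ▷ψ`, `▷(φ ∨ ψ) ⟺ ▷φ ∨ ▷ψ`, and
`▷(φ ⇒ ψ) ⟺ (▷φ ⇒ ▷ψ)`, i.e. the corresponding truth values agree at every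
stage. -/
theorem later_distributes_over_connectives (i p q : ℕ) (hi : 1 ≤ i)
    (hp : p ≤ i) (hq : q ≤ i) :
    laterO i (andO p q) = andO (laterO i p) (laterO i q) ∧
    laterO i (orO p q) = orO (laterO i p) (laterO i q) ∧
    laterO i (impO i p q) = impO i (laterO i p) (laterO i q) :=
  later_distributes_over_connectives_general i p q hp
end
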